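/- In the sequential lambda-calculus modulo beta-eta equivalence, closed typed terms form a strict premonoidal category: in particular, the left whiskering M ⊗ !t := M (with type weakened by extra inputs/outputs of type !t) and the right whiskering !t ⊗ M := <x_n>…<x_1>.M.[x_1]…[x_n] are both functorial, i.e. preserve identities and composition up to beta-eta equivalence. -/

import Mathlib

/- ===== Terms (sequential λ-calculus uses only the main location `0`) ===== -/
inductive Tm : Type
  | nil : Tm
  | var : ℕ → Tm → Tm
  | app : Tm → ℕ → Tm → Tm
  | abs : ℕ → ℕ → Tm → Tm
  deriving DecidableEq

namespace Tm
def comp : Tm → Tm → Tm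
  | nil, M => M
  | var x N, M => var x (comp N M)
  | app P a N, M => app P a (comp N M)
  | abs a x N, M => abs a x (comp N M)
def fv : Tm → Finset ℕ
  | nil => ∅
  | var x N => insert x (fv N)
  | app P _ N => fv P ∪ fv N
  | abs _ x N => (fv N).erase x
def subst (P : Tm) (x : ℕ) : Tm → Tm
  | nil => nil
  | var y M => if y = x then comp P (subst P x M) else var y (subst P x M)
  | app N a M => app (subst P x N) a (subst P x M)
  | abs a y M => if y = x then abs a y M else abs a y (subst P x M)
end Tm

/-- `<?x>.M`: the sequence of pops `<x_n>…<x_1>.M` (main location). -/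
def pops (xs : List ℕ) (M : Tm) : Tm := xs.foldl (fun acc x => Tm.abs 0 x acc) M

/-- `[!x].M`: the sequence of pushes `[x_1]…[x_n].M` (main location). -/
def pushes (xs : List ℕ) (M : Tm) : Tm :=
  xs.foldr (fun x acc => Tm.app (Tm.var x Tm.nil) 0 acc) M

/-- `xs` is fresh for `M`: no variable of `xs` occurs free in `M`. -/
def FreshL (xs : List ℕ) (M : Tm) : Prop := ∀ x ∈ xs, x ∉ M.fv

/- ===== Simple types of the sequential λ-calculus ===== -/
/-- Sequential simple types: base types and stack-transformer types `?s > !t`,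
with stack types as lists of types (head = top of stack). -/
inductive STy : Type
  | base : ℕ → STy
  | arr : List STy → List STy → STy

/-- Typing of the sequential λ-calculus (all actions at the main location `0`). -/
inductive SDeriv : List (ℕ × STy) → Tm → STy → Prop
  | nil {Γ : List (ℕ × STy)} (t : List STy) : SDeriv Γ .nil (.arr t t)
  | bvar {Γ : List (ℕ × STy)} {x α} : (x, STy.base α) ∈ Γ →
      SDeriv Γ (.var x .nil) (.base α)
  | seqvar {Γ : List (ℕ × STy)} {x : ℕ} {r s t u : List STy} {M : Tm} :
      (x, STy.arr r s) ∈ Γ → SDeriv Γ M (.arr (s ++ t) u) →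
      SDeriv Γ (.var x M) (.arr (r ++ t) u)
  | abs {Γ : List (ℕ × STy)} {x : ℕ} {r : STy} {s t : List STy} {M : Tm} :
      SDeriv ((x, r) :: Γ) M (.arr s t) →
      SDeriv Γ (.abs 0 x M) (.arr (r :: s) t)
  | app {Γ : List (ℕ × STy)} {r : STy} {s t : List STy} {N M : Tm} :
      SDeriv Γ N r → SDeriv Γ M (.arr (r :: s) t) →
      SDeriv Γ (.app N 0 M) (.arr s t)

/- ===== Beta-eta equivalence ===== -/
/-- Beta-eta equivalence of the sequential λ-calculus: generated by
`[N].<x>.M = {N/x}M` and `M = <x>.[x].M` (`x ∉ fv M`), closed under all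
contexts; an equivalence relation. -/
inductive BetaEta : Tm → Tm → Prop
  | beta {N x M} : BetaEta (.app N 0 (.abs 0 x M)) (Tm.subst N x M)
  | eta {M x} : x ∉ Tm.fv M → BetaEta M (.abs 0 x (.app (.var x .nil) 0 M))
  | refl (M) : BetaEta M M
  | symm {M N} : BetaEta M N → BetaEta N M
  | trans {M N P} : BetaEta M N → BetaEta N P → BetaEta M P
  | var_congr {x M M'} : BetaEta M M' → BetaEta (.var x M) (.var x M')
  | app_left {N N' a M} : BetaEta N N' → BetaEta (.app N a M) (.app N' a M)
  | app_right {N a M M'} : BetaEta M M' → BetaEta (.app N a M) (.app N a M')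
  | abs_congr {a x M M'} : BetaEta M M' → BetaEta (.abs a x M) (.abs a x M')

/- ===== The equational theory ===== -/
/-- The equational theory `=eqn` of the sequential λ-calculus: beta,
interchange, diagonal, terminal, first-order eta and higher-order eta,
closed under all contexts (freshness side conditions as in the paper). -/
inductive EqTh : Tm → Tm → Prop
  | beta {N x M} : EqTh (.app N 0 (.abs 0 x M)) (Tm.subst N x M)
  | interchange {xs ys : List ℕ} {N M : Tm} :
      xs.Nodup → ys.Nodup → FreshL xs N → FreshL xs M → FreshL ys N → FreshL ys M →
      EqTh (pops xs (Tm.comp N (pushes xs M)))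
           (Tm.comp M (pops ys (Tm.comp N (pushes ys .nil))))
  | diagonal {xs ys : List ℕ} {M : Tm} :
      xs.Nodup → ys.Nodup → FreshL xs M → FreshL ys M →
      EqTh (Tm.comp M (pops ys (pushes ys (pushes ys .nil))))
           (pops xs (pushes xs (Tm.comp M (pushes xs M))))
  | terminal {xs ys : List ℕ} {M : Tm} :
      EqTh (Tm.comp M (pops ys .nil)) (pops xs .nil)
  | eta1 {a : ℕ} : EqTh .nil (.abs 0 a (.app (.var a .nil) 0 .nil))
  | etaho {xs : List ℕ} {z : ℕ} {P : Tm} :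
      xs.Nodup → FreshL xs P → z ∉ Tm.fv P →
      EqTh P (pops xs (.app (pushes xs (Tm.comp P (.abs 0 z (.var z .nil)))) 0 .nil))
  | refl (M) : EqTh M M
  | symm {M N} : EqTh M N → EqTh N M
  | trans {M N P} : EqTh M N → EqTh N P → EqTh M P
  | var_congr {x M M'} : EqTh M M' → EqTh (.var x M) (.var x M')
  | app_left {N N' a M} : EqTh N N' → EqTh (.app N a M) (.app N' a M)
  | app_right {N a M M'} : EqTh M M' → EqTh (.app N a M) (.app N a M')
  | abs_congr {a x M M'} : EqTh M M' → EqTh (.abs a x M) (.abs a x M')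

/- ===== The stack machine and machine equivalence ===== -/
/-- Single-stack machine of the sequential λ-calculus (head = top). -/
inductive SStep : List Tm × Tm → List Tm × Tm → Prop
  | push (S N M) : SStep (S, Tm.app N 0 M) (N :: S, M)
  | pop (S N x M) : SStep (N :: S, Tm.abs 0 x M) (S, Tm.subst N x M)

/-- `Ev S M T`: the machine run `(S, M) ⇓ T`. -/
def Ev (S : List Tm) (M : Tm) (T : List Tm) : Prop :=
  Relation.ReflTransGen SStep (S, M) (T, Tm.nil)

mutual
  /-- Machine equivalence `M ~ M' : t` for closed terms, by induction on types:
  at base type, equality; at arrow type, equivalent inputs give terminating runs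
  with equivalent outputs. -/
  def MEquiv : STy → Tm → Tm → Prop
    | .base _, M, M' => M = M'
    | .arr s t, M, M' => ∀ S S', StackEquiv s S S' →
        ∃ T T', Ev S M T ∧ Ev S' M' T' ∧ StackEquiv t T T'
  /-- Pairwise equivalence of stacks at a stack type. -/
  def StackEquiv : List STy → List Tm → List Tm → Prop
    | [], S, S' => S = [] ∧ S' = []
    | r :: ts, S, S' => ∃ N N' R R',
        S = N :: R ∧ S' = N' :: R' ∧ MEquiv r N N' ∧ StackEquiv ts R R'
end

/-- Simultaneous substitution of a stack of (closed) terms for a vector of variables. -/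
def msubst : List ℕ → List Tm → Tm → Tm
  | x :: xs, N :: Ns, M => msubst xs Ns (Tm.subst N x M)
  | _, _, M => M

/-- Machine equivalence of open terms `x⃗:w⃗ ⊢ M ~ M' : t`. -/
def OEquiv (Γ : List (ℕ × STy)) (M M' : Tm) (t : STy) : Prop :=
  ∀ W W', StackEquiv (Γ.map Prod.snd) W W' →
    MEquiv t (msubst (Γ.map Prod.fst) W M) (msubst (Γ.map Prod.fst) W' M')

/-- Left whiskering `M ⊗ !t := M` (the type is weakened, the term unchanged). -/
def whiskL (M : Tm) : Tm := M

/-- Right whiskering `!t ⊗ M := <x_n>…<x_1>.M.[x_1]…[x_n]`. -/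
def whiskR (xs : List ℕ) (M : Tm) : Tm := pops xs (Tm.comp M (pushes xs Tm.nil))

/-! Composing two right whiskerings places the pushes `[x⃗]` of the first directly in front of
the pops `<x⃗>` of the second; these cancel by β one variable at a time, since substituting a
variable for itself is the identity. The identity `<x⃗>.[x⃗]` collapses to `*` by η, innermost
variable first: as the variables are distinct, each is fresh for the pushes that remain. -/

namespace Tm

theorem comp_assoc (A B C : Tm) : (A.comp B).comp C = A.comp (B.comp C) := by
  induction A <;> simp [comp, *]

theorem subst_var_self (x : ℕ) (M : Tm) : subst (var x nil) x M = M := by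
  induction M with
  | nil => rfl
  | var y N ih => by_cases h : y = x <;> simp [subst, h, comp, ih]
  | app P a N ihP ihN => simp [subst, ihP, ihN]
  | abs a y N ih => by_cases h : y = x <;> simp [subst, h, ih]

end Tm

theorem pops_comp (xs : List ℕ) (A B : Tm) : (pops xs A).comp B = pops xs (A.comp B) := by
  induction xs generalizing A with
  | nil => rfl
  | cons x xs ih => exact ih (Tm.abs 0 x A)

theorem pushes_comp (xs : List ℕ) (A B : Tm) :
    (pushes xs A).comp B = pushes xs (A.comp B) := by
  induction xs with
  | nil => rfl
  | cons x xs ih => simp only [pushes, List.foldr_cons] at *; simp [Tm.comp, ih]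

theorem notMem_fv_pushes {x : ℕ} {xs : List ℕ} {M : Tm} (hxs : x ∉ xs) (hM : x ∉ M.fv) :
    x ∉ (pushes xs M).fv := by
  induction xs with
  | nil => exact hM
  | cons y ys ih =>
    simp only [List.mem_cons, not_or] at hxs
    simpa [pushes, Tm.fv, hxs.1] using ih hxs.2

namespace BetaEta

theorem comp_right {B B' : Tm} (A : Tm) (h : BetaEta B B') : BetaEta (A.comp B) (A.comp B') := by
  induction A with
  | nil => exact h
  | var x N ih => exact var_congr ih
  | app P a N _ ih => exact app_right ih
  | abs a x N ih => exact abs_congr ih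

theorem pops_congr {M M' : Tm} (xs : List ℕ) (h : BetaEta M M') :
    BetaEta (pops xs M) (pops xs M') := by
  induction xs generalizing M M' with
  | nil => exact h
  | cons x xs ih => exact ih (abs_congr h)

theorem pushes_pops (xs : List ℕ) (P : Tm) : BetaEta (pushes xs (pops xs P)) P := by
  induction xs generalizing P with
  | nil => exact refl P
  | cons x xs ih =>
    have hbeta : BetaEta (.app (.var x .nil) 0 (.abs 0 x P)) P := by
      simpa only [Tm.subst_var_self] using @beta (.var x .nil) x P
    exact trans (app_right (ih (.abs 0 x P))) hbeta

theorem pops_pushes {xs : List ℕ} {M : Tm} (hnd : xs.Nodup) (hfr : FreshL xs M) :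
    BetaEta (pops xs (pushes xs M)) M := by
  induction xs with
  | nil => exact refl M
  | cons x ys ih =>
    obtain ⟨hx, hnd⟩ := List.nodup_cons.mp hnd
    have heta := eta (x := x) (notMem_fv_pushes hx (hfr x List.mem_cons_self))
    exact trans (pops_congr ys (symm heta))
      (ih hnd fun y hy => hfr y (List.mem_cons_of_mem x hy))

end BetaEta

theorem whiskR_nil {xs : List ℕ} (hnd : xs.Nodup) : BetaEta (whiskR xs Tm.nil) Tm.nil :=
  BetaEta.pops_pushes hnd fun _ _ => Finset.notMem_empty _

theorem whiskR_comp_whiskR (xs : List ℕ) (M N : Tm) :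
    (whiskR xs M).comp (whiskR xs N) = pops xs (M.comp (pushes xs (whiskR xs N))) := by
  simp only [whiskR, pops_comp, Tm.comp_assoc, pushes_comp]
  rfl

theorem whiskR_comp (xs : List ℕ) (M N : Tm) :
    BetaEta ((whiskR xs M).comp (whiskR xs N)) (whiskR xs (M.comp N)) := by
  rw [whiskR_comp_whiskR, whiskR, whiskR, Tm.comp_assoc]
  exact BetaEta.pops_congr xs (BetaEta.comp_right M (BetaEta.pushes_pops xs _))

/-- closed typed terms modulo beta-eta form a strict premonoidal
category: both whiskerings preserve identities and composition up to beta-eta. -/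
theorem premonoidal_whiskering_functorial {ts : List STy} (xs : List ℕ)
    (hlen : xs.length = ts.length) (hnd : xs.Nodup) :
    (BetaEta (whiskL Tm.nil) Tm.nil) ∧
    (∀ (r s u : List STy) (M N : Tm),
        SDeriv [] M (.arr r s) → SDeriv [] N (.arr s u) →
        BetaEta (Tm.comp (whiskL M) (whiskL N)) (whiskL (Tm.comp M N))) ∧
    (BetaEta (whiskR xs Tm.nil) Tm.nil) ∧
    (∀ (r s u : List STy) (M N : Tm),
        SDeriv [] M (.arr r s) → SDeriv [] N (.arr s u) →
        FreshL xs M → FreshL xs N →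
        BetaEta (Tm.comp (whiskR xs M) (whiskR xs N)) (whiskR xs (Tm.comp M N))) :=
  ⟨.refl _, fun _ _ _ M N _ _ => .refl (M.comp N), whiskR_nil hnd,
    fun _ _ _ M N _ _ _ _ => whiskR_comp xs M N⟩
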